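/- arXiv:math-ph/0304016 — 2 statements merged into one kernel-verified Lean document; each statement's English description precedes it below -/
import Mathlib

section
/- Heine's formula: the N-th monic orthogonal polynomial with respect to a measure α equals the average of the characteristic polynomial ∏ᵢ(μ − xᵢ) over the eigenvalue distribution with density Δ(x)²dα(x), i.e. π_N(μ) = (1/Z_N) ∫⋯∫ ∏_{i=1}^N (μ − xᵢ) Δ(x)² dα(x₁)⋯dα(x_N). -/
/-!
Write `Δ(x) = det [π_j(x_i)]` (column operations against the monic `π_j`) and
`∏ᵢ (μ - xᵢ) Δ(x) = Δ(x, μ)`, the Vandermonde determinant of `N + 1` points. Andréief's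
identity `∫ det [f_j(x_i)] det [g_k(x_i)] dα^N = N! det [∫ f_j g_k dα]` turns both integrals
into Gram determinants. Orthogonality makes the Gram matrix of `π_0, …, π_{N-1}` diagonal, so
`Z_N = N! ∏_{k<N} ‖π_k‖²`. Expanding `Δ(x, μ)` along the row of `μ`, the cofactor of `π_j(μ)`
for `j < N` still contains `π_N`, whose Gram row vanishes; only `π_N(μ) · N! ∏_{k<N} ‖π_k‖²`
survives.
-/

open MeasureTheory Polynomial Finset

/-- The Vandermonde product `∏_{i>j} (x i - x j)`. -/
noncomputable def Vand {n : ℕ} (x : Fin n → ℝ) : ℝ :=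
  ∏ i : Fin n, ∏ j ∈ Finset.Iio i, (x i - x j)

namespace Matrix

variable {ι R : Type*} [Fintype ι] [DecidableEq ι] [CommRing R]

theorem det_mul_det_eq_sum_sign_mul_sign_mul_prod (A B : Matrix ι ι R) :
    A.det * B.det = ∑ σ : Equiv.Perm ι, ∑ τ : Equiv.Perm ι,
      ((σ.sign : ℤ) : R) * (τ.sign : ℤ) * ∏ i, A i (σ i) * B i (τ i) := by
  rw [← det_transpose A, ← det_transpose B, det_apply', det_apply', sum_mul_sum]
  refine sum_congr rfl fun σ _ => sum_congr rfl fun τ _ => ?_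
  simp only [transpose_apply, prod_mul_distrib]
  ring

theorem sum_sign_mul_sign_mul_prod_eq_factorial_mul_det (G : Matrix ι ι R) :
    ∑ σ : Equiv.Perm ι, ∑ τ : Equiv.Perm ι,
      ((σ.sign : ℤ) : R) * (τ.sign : ℤ) * ∏ i, G (σ i) (τ i) =
      (Fintype.card ι).factorial * G.det := by
  have hrow (σ : Equiv.Perm ι) :
      ∑ τ : Equiv.Perm ι, ((τ.sign : ℤ) : R) * ∏ i, G (σ i) (τ i) = (σ.sign : ℤ) * G.det := by
    rw [← det_permute, ← det_transpose, det_apply']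
    rfl
  simp_rw [mul_assoc, ← mul_sum, hrow, ← mul_assoc, ← Int.cast_mul, ← Units.val_mul,
    Int.units_mul_self, Units.val_one, Int.cast_one, one_mul, sum_const, card_univ,
    Fintype.card_perm, nsmul_eq_mul]

end Matrix

section Andreief

variable {β ι 𝕜 : Type*} [MeasurableSpace β] [Fintype ι] [RCLike 𝕜]
  {α : Measure β} [SigmaFinite α] {f g : ι → β → 𝕜}

theorem integrable_pi_prod_mul (hfg : ∀ j k, Integrable (fun t => f j t * g k t) α)
    (σ τ : ι → ι) :
    Integrable (fun x : ι → β => ∏ i, f (σ i) (x i) * g (τ i) (x i))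
      (Measure.pi fun _ => α) :=
  Integrable.fintype_prod (f := fun i t => f (σ i) t * g (τ i) t) fun _ => hfg _ _

variable [DecidableEq ι]

theorem integrable_det_mul_det (hfg : ∀ j k, Integrable (fun t => f j t * g k t) α) :
    Integrable (fun x : ι → β =>
      (Matrix.of fun i j => f j (x i)).det * (Matrix.of fun i j => g j (x i)).det)
      (Measure.pi fun _ => α) := by
  simp_rw [Matrix.det_mul_det_eq_sum_sign_mul_sign_mul_prod, Matrix.of_apply]
  exact integrable_finsetSum _ fun σ _ => integrable_finsetSum _ fun τ _ =>
    (integrable_pi_prod_mul hfg σ τ).const_mul _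

theorem integral_det_mul_det (hfg : ∀ j k, Integrable (fun t => f j t * g k t) α) :
    ∫ x : ι → β, (Matrix.of fun i j => f j (x i)).det * (Matrix.of fun i j => g j (x i)).det
      ∂(Measure.pi fun _ => α) =
      (Fintype.card ι).factorial * (Matrix.of fun j k => ∫ t, f j t * g k t ∂α).det := by
  simp_rw [← Matrix.sum_sign_mul_sign_mul_prod_eq_factorial_mul_det,
    Matrix.det_mul_det_eq_sum_sign_mul_sign_mul_prod, Matrix.of_apply]
  have hint (σ τ : Equiv.Perm ι) := (integrable_pi_prod_mul hfg σ τ).const_mul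
    (((σ.sign : ℤ) : 𝕜) * (τ.sign : ℤ))
  rw [integral_finsetSum _ fun σ _ => integrable_finsetSum _ fun τ _ => hint σ τ]
  refine sum_congr rfl fun σ _ => ?_
  rw [integral_finsetSum _ fun τ _ => hint σ τ]
  refine sum_congr rfl fun τ _ => ?_
  rw [integral_const_mul, integral_fintype_prod_eq_prod (fun i t => f (σ i) t * g (τ i) t)]

end Andreief

theorem Vand_eq_det_vandermonde {n : ℕ} (x : Fin n → ℝ) :
    Vand x = (Matrix.vandermonde x).det := by
  rw [Matrix.det_vandermonde, Vand, prod_sigma', prod_sigma']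
  refine prod_nbij' (fun p => ⟨p.2, p.1⟩) (fun p => ⟨p.2, p.1⟩) ?_ ?_ ?_ ?_ ?_ <;>
    simp [mem_sigma]

theorem Vand_eq_det_eval {n : ℕ} {p : ℕ → ℝ[X]} (hmonic : ∀ j, (p j).Monic)
    (hdeg : ∀ j, (p j).natDegree = j) (x : Fin n → ℝ) :
    Vand x = (Matrix.of fun i j : Fin n => (p j).eval (x i)).det := by
  rw [Vand_eq_det_vandermonde, Matrix.det_eval_matrixOfPolynomials_eq_det_vandermonde x
    (fun j => p j) (fun j => hdeg j) (fun j => hmonic j)]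

theorem Vand_snoc {n : ℕ} (x : Fin n → ℝ) (μ : ℝ) :
    Vand (Fin.snoc x μ : Fin (n + 1) → ℝ) = (∏ i, (μ - x i)) * Vand x := by
  simp [Vand, Fin.prod_univ_castSucc, Fin.prod_Iio_castSucc, Fin.Iio_last_eq_map, mul_comm]

theorem integrable_eval_of_integrable_abs_pow {α : Measure ℝ}
    (hmom : ∀ k : ℕ, Integrable (fun t => |t| ^ k) α) (p : ℝ[X]) :
    Integrable (fun t => p.eval t) α := by
  have hpow (k : ℕ) : Integrable (fun t : ℝ => t ^ k) α :=
    (integrable_norm_iff (by fun_prop)).mp (by simpa [abs_pow] using hmom k)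
  simp_rw [eval_eq_sum_range]
  exact integrable_finsetSum _ fun k _ => (hpow k).const_mul _

section OrthogonalPolynomials

variable {α : Measure ℝ} {π : ℕ → ℝ[X]}

theorem det_gram_eq_prod (horth : ∀ j k, j ≠ k → ∫ t, (π j).eval t * (π k).eval t ∂α = 0)
    (n : ℕ) :
    (Matrix.of fun j k : Fin n => ∫ t, (π j).eval t * (π k).eval t ∂α).det =
      ∏ k : Fin n, ∫ t, (π k).eval t * (π k).eval t ∂α := by
  rw [← Matrix.det_diagonal]
  congr 1
  ext j k
  by_cases hjk : j = k
  · simp [hjk]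
  · simp [hjk, horth _ _ (Fin.val_injective.ne hjk)]

theorem det_gram_succAbove_eq_zero
    (horth : ∀ j k, j ≠ k → ∫ t, (π j).eval t * (π k).eval t ∂α = 0)
    {n : ℕ} {j : Fin (n + 1)} (hj : j ≠ Fin.last n) :
    (Matrix.of fun a k : Fin n => ∫ t, (π (j.succAbove a)).eval t * (π k).eval t ∂α).det = 0 := by
  obtain ⟨a, ha⟩ := Fin.exists_succAbove_eq hj.symm
  refine Matrix.det_eq_zero_of_row_eq_zero a fun k => ?_
  simp only [Matrix.of_apply, ha, Fin.val_last]
  exact horth _ _ k.isLt.ne'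

variable [SigmaFinite α]

theorem integral_Vand_sq (hint : ∀ p : ℝ[X], Integrable (fun t => p.eval t) α)
    (hmonic : ∀ j, (π j).Monic) (hdeg : ∀ j, (π j).natDegree = j)
    (horth : ∀ j k, j ≠ k → ∫ t, (π j).eval t * (π k).eval t ∂α = 0) (n : ℕ) :
    ∫ x : Fin n → ℝ, Vand x ^ 2 ∂(Measure.pi fun _ => α) =
      n.factorial * ∏ k : Fin n, ∫ t, (π k).eval t * (π k).eval t ∂α := by
  simp_rw [sq, Vand_eq_det_eval hmonic hdeg]
  rw [integral_det_mul_det (f := fun (j : Fin n) t => (π j).eval t) (g := fun j t => (π j).eval t)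
    fun j k => by simpa using hint (π j * π k), Fintype.card_fin, det_gram_eq_prod horth]

theorem prod_sub_mul_Vand_sq_eq_sum {n : ℕ} (hmonic : ∀ j, (π j).Monic)
    (hdeg : ∀ j, (π j).natDegree = j) (μ : ℝ) (x : Fin n → ℝ) :
    (∏ i, (μ - x i)) * Vand x ^ 2 = ∑ j : Fin (n + 1), (-1) ^ (n + j : ℕ) * (π j).eval μ *
      ((Matrix.of fun a b : Fin n => (π (j.succAbove b)).eval (x a)).det *
        (Matrix.of fun a b : Fin n => (π b).eval (x a)).det) := by
  rw [sq, ← mul_assoc, ← Vand_snoc, Vand_eq_det_eval hmonic hdeg, Vand_eq_det_eval hmonic hdeg,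
    Matrix.det_succ_row _ (Fin.last n), sum_mul]
  refine sum_congr rfl fun j _ => ?_
  simp [Matrix.submatrix, mul_assoc]

theorem integral_prod_sub_mul_Vand_sq (hint : ∀ p : ℝ[X], Integrable (fun t => p.eval t) α)
    (hmonic : ∀ j, (π j).Monic) (hdeg : ∀ j, (π j).natDegree = j)
    (horth : ∀ j k, j ≠ k → ∫ t, (π j).eval t * (π k).eval t ∂α = 0) (n : ℕ) (μ : ℝ) :
    ∫ x : Fin n → ℝ, (∏ i, (μ - x i)) * Vand x ^ 2 ∂(Measure.pi fun _ => α) =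
      (π n).eval μ * (n.factorial * ∏ k : Fin n, ∫ t, (π k).eval t * (π k).eval t ∂α) := by
  have hprod (j : Fin (n + 1)) : ∀ a b : Fin n,
      Integrable (fun t => (π (j.succAbove a)).eval t * (π b).eval t) α :=
    fun a b => by simpa using hint (π (j.succAbove a) * π b)
  simp_rw [prod_sub_mul_Vand_sq_eq_sum hmonic hdeg]
  rw [integral_finsetSum _ fun j _ => (integrable_det_mul_det
    (f := fun a t => (π (j.succAbove a)).eval t) (g := fun b t => (π b).eval t)
    (hprod j)).const_mul _]
  simp_rw [integral_const_mul]
  rw [Fintype.sum_eq_single (Fin.last n) fun j hj => by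
    rw [integral_det_mul_det (hprod j), det_gram_succAbove_eq_zero horth hj, mul_zero, mul_zero]]
  rw [integral_det_mul_det (hprod _)]
  simp [← det_gram_eq_prod horth n, ← two_mul, pow_mul]

end OrthogonalPolynomials

/-- Heine's formula: the `N`-th monic orthogonal polynomial is the average of the
characteristic polynomial over the unitary-ensemble eigenvalue measure. -/
theorem heine_formula (α : Measure ℝ)
    (hmom : ∀ k : ℕ, Integrable (fun t => |t| ^ k) α)
    (hposdef : ∀ p : Polynomial ℝ, p ≠ 0 → 0 < ∫ t, (p.eval t) ^ 2 ∂α)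
    (π : ℕ → Polynomial ℝ)
    (hmonic : ∀ j, (π j).Monic) (hdeg : ∀ j, (π j).natDegree = j)
    (horth : ∀ j k, j ≠ k → ∫ t, (π j).eval t * (π k).eval t ∂α = 0)
    (N : ℕ) (Z : ℝ)
    (hZ : Z = ∫ x : Fin N → ℝ, (Vand x) ^ 2 ∂(Measure.pi fun _ => α))
    (μ : ℝ) :
    (π N).eval μ =
      (1 / Z) * ∫ x : Fin N → ℝ, (∏ i, (μ - x i)) * (Vand x) ^ 2
        ∂(Measure.pi fun _ => α) := by
  have : IsFiniteMeasure α :=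
    (integrable_const_iff_isFiniteMeasure one_ne_zero).mp (by simpa using hmom 0)
  have hint := integrable_eval_of_integrable_abs_pow hmom
  have hnorm : 0 < ∏ k : Fin N, ∫ t, (π k).eval t * (π k).eval t ∂α :=
    prod_pos fun k _ => by simpa [sq] using hposdef _ (hmonic k).ne_zero
  rw [hZ, integral_Vand_sq hint hmonic hdeg horth,
    integral_prod_sub_mul_Vand_sq hint hmonic hdeg horth, one_div_mul_eq_div,
    mul_div_cancel_right₀ _ (mul_pos (by positivity) hnorm).ne']
end

section
/- Orthogonality of the Uvarov determinant polynomial: the polynomial q(t) given by the determinant with rows (h_{n−m}(εᵢ),…,h_n(εᵢ)), i = 1,…,m, and last row (π_{n−m}(t),…,π_n(t)), satisfies ∫ q(t)/(t − ε_j) dα(t) = 0 for each j = 1,…,m, and ∫ t^k q(t) dα^{[0,m]}(t) = 0 for 0 ≤ k < n, where dα^{[0,m]}(t) = dα(t)/∏_{j}(ε_j − t). -/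
open MeasureTheory Polynomial Matrix

/-! The determinant is linear in its last row, so integrating `q` against a weight `g` amounts to
replacing the last row by the `g`-moments of `π_{n-m}, …, π_n`. For `g = (t - ε_j)⁻¹` this row is
`2πi` times row `j`, and for a polynomial `g` of degree `< n - m` it vanishes by orthogonality.
Finally, by partial fractions (Lagrange interpolation at the nodes `ε_j`), `t^k / ∏_j (ε_j - t)`
with `k < n` is a polynomial of degree `< n - m` plus a combination of the `(t - ε_j)⁻¹`. -/

namespace Matrix

variable {X 𝕜 : Type*} [MeasurableSpace X] {μ : Measure X} [RCLike 𝕜]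

theorem integral_det_updateRow {n : Type*} [Fintype n] [DecidableEq n] (A : Matrix n n 𝕜) (r : n)
    {f : X → n → 𝕜} (hf : ∀ j, Integrable (fun x => f x j) μ) :
    ∫ x, (A.updateRow r (f x)).det ∂μ = (A.updateRow r fun j => ∫ x, f x j ∂μ).det := by
  simp_rw [← cramer_transpose_apply, cramer_eq_adjugate_mulVec, mulVec, dotProduct]
  rw [integral_finsetSum _ fun j _ => (hf j).const_mul _]
  simp_rw [integral_const_mul]

variable {R : Type*} {m : ℕ}

theorem of_snoc_eq_of_dite {n : Type*} (H : Fin m → n → R) (v : n → R) :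
    of (Fin.snoc H v) =
      of fun (i : Fin (m + 1)) j => if hi : (i : ℕ) < m then H ⟨i, hi⟩ j else v j := by
  ext i j
  simp only [of_apply, Fin.snoc, cast_eq]
  split_ifs <;> rfl

variable [CommRing R]

theorem of_snoc_eq_updateRow {n : Type*} [DecidableEq n] (H : Fin m → n → R) (v : n → R) :
    of (Fin.snoc H v) = (of (Fin.snoc H 0)).updateRow (Fin.last m) v := by
  ext i j
  rcases Fin.eq_castSucc_or_eq_last i with ⟨i, rfl⟩ | rfl <;> simp [updateRow_apply]

theorem det_of_snoc_self (H : Fin m → Fin (m + 1) → R) (i : Fin m) :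
    (of (Fin.snoc H (H i))).det = 0 :=
  det_zero_of_row_eq (Fin.castSucc_lt_last i).ne (by ext; simp)

theorem det_of_snoc_smul (H : Fin m → Fin (m + 1) → R) (c : R) (v : Fin (m + 1) → R) :
    (of (Fin.snoc H (c • v))).det = c * (of (Fin.snoc H v)).det := by
  rw [of_snoc_eq_updateRow, det_updateRow_smul, ← of_snoc_eq_updateRow]

theorem det_of_snoc_zero (H : Fin m → Fin (m + 1) → R) : (of (Fin.snoc H 0)).det = 0 :=
  det_eq_zero_of_row_eq_zero (Fin.last m) fun _ => by simp

theorem integral_mul_det_of_snoc (H : Fin m → Fin (m + 1) → 𝕜) {g : X → 𝕜}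
    {f : X → Fin (m + 1) → 𝕜} (hf : ∀ j, Integrable (fun x => g x * f x j) μ) :
    ∫ x, g x * (of (Fin.snoc H (f x))).det ∂μ =
      (of (Fin.snoc H fun j => ∫ x, g x * f x j ∂μ)).det := by
  have hdet : ∀ v, (of (Fin.snoc H v)).det = ((of (Fin.snoc H 0)).updateRow (Fin.last m) v).det :=
    fun v => by rw [of_snoc_eq_updateRow]
  simp_rw [← det_of_snoc_smul, hdet]
  exact integral_det_updateRow _ _ hf

theorem integral_mul_det_of_snoc_eq_zero_of_eq_smul (H : Fin m → Fin (m + 1) → 𝕜) (i : Fin m)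
    (c : 𝕜) {g : X → 𝕜} {f : X → Fin (m + 1) → 𝕜}
    (hf : ∀ j, Integrable (fun x => g x * f x j) μ)
    (hrow : ∀ j, ∫ x, g x * f x j ∂μ = c * H i j) :
    ∫ x, g x * (of (Fin.snoc H (f x))).det ∂μ = 0 := by
  rw [integral_mul_det_of_snoc H hf, funext hrow]
  exact (det_of_snoc_smul H c (H i)).trans (mul_eq_zero_of_right c (det_of_snoc_self H i))

theorem integral_mul_det_of_snoc_eq_zero (H : Fin m → Fin (m + 1) → 𝕜) {g : X → 𝕜}
    {f : X → Fin (m + 1) → 𝕜} (hf : ∀ j, Integrable (fun x => g x * f x j) μ)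
    (hrow : ∀ j, ∫ x, g x * f x j ∂μ = 0) :
    ∫ x, g x * (of (Fin.snoc H (f x))).det ∂μ = 0 := by
  rw [integral_mul_det_of_snoc H hf, funext hrow, ← Pi.zero_def, det_of_snoc_zero]

end Matrix

theorem ContinuousOn.integrable_of_measure_compl_eq_zero {X E : Type*} [TopologicalSpace X]
    [T2Space X] [MeasurableSpace X] [OpensMeasurableSpace X] [NormedAddCommGroup E]
    {μ : Measure X} [IsFiniteMeasure μ] {K : Set X} {f : X → E} (hK : IsCompact K)
    (hμK : μ Kᶜ = 0) (hf : ContinuousOn f K) : Integrable f μ := by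
  rw [← Measure.restrict_eq_self_of_ae_mem (ae_iff.2 hμK)]
  exact hf.integrableOn_compact hK

theorem continuousOn_inv_ofReal_sub {K : Set ℝ} {e : ℝ} (he : e ∉ K) :
    ContinuousOn (fun t : ℝ => ((t : ℂ) - e)⁻¹) K :=
  (Complex.continuous_ofReal.sub continuous_const).continuousOn.inv₀
    fun _ ht => sub_ne_zero.2 (Complex.ofReal_injective.ne fun hte => he (hte ▸ ht))

theorem Polynomial.degree_divByMonic_lt_of_natDegree_lt {R : Type*} [CommRing R] [Nontrivial R]
    {p g : R[X]} (hg : g.Monic) {l : ℕ} (h : p.natDegree < l + g.natDegree) :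
    (p /ₘ g).degree < l := by
  by_cases hp : p /ₘ g = 0
  · simp [hp]
  have hgp : g.natDegree ≤ p.natDegree :=
    natDegree_le_natDegree (not_lt.1 ((divByMonic_eq_zero_iff hg).not.1 hp))
  rw [degree_eq_natDegree hp, natDegree_divByMonic _ hg]
  exact_mod_cast (by omega : p.natDegree - g.natDegree < l)

theorem Polynomial.Sequence.integral_eval_mul_eq_zero_of_degree_lt {μ : Measure ℝ}
    (hμ : ∀ p : ℝ[X], Integrable (fun t => p.eval t) μ) (S : Sequence ℝ)
    (horth : ∀ j k, j ≠ k → ∫ t, (S j).eval t * (S k).eval t ∂μ = 0)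
    {p : ℝ[X]} {l : ℕ} (hp : p.degree < l) : ∫ t, p.eval t * (S l).eval t ∂μ = 0 := by
  let L : ℝ[X] →ₗ[ℝ] ℝ :=
    { toFun := fun p => ∫ t, p.eval t * (S l).eval t ∂μ
      map_add' := fun p q => by
        simp_rw [eval_add, add_mul]
        exact integral_add (by simpa using hμ (p * S l)) (by simpa using hμ (q * S l))
      map_smul' := fun c p => by simp [mul_assoc, integral_const_mul] }
  have hspan : Submodule.span ℝ (S '' Set.Iio l) ≤ LinearMap.ker L := by
    rw [Submodule.span_le]
    rintro _ ⟨j, hj, rfl⟩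
    exact horth j l (ne_of_lt hj)
  exact hspan ((S.span_degreeLT fun i _ => (leadingCoeff_ne_zero.2 (S.ne_zero i)).isUnit).symm ▸
    mem_degreeLT.2 hp)

theorem Lagrange.eval_div_eval_nodal {F ι : Type*} [Field F] [DecidableEq ι] {s : Finset ι}
    {v : ι → F} (hvs : Set.InjOn v s) (p : F[X]) {x : F} (hx : ∀ i ∈ s, x ≠ v i) :
    p.eval x / (nodal s v).eval x = (p /ₘ nodal s v).eval x +
      ∑ i ∈ s, nodalWeight s v i * (x - v i)⁻¹ * (p %ₘ nodal s v).eval (v i) := by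
  have hrem : p %ₘ nodal s v = interpolate s v fun i => (p %ₘ nodal s v).eval (v i) :=
    eq_interpolate hvs (degree_nodal (s := s) (v := v) ▸ degree_modByMonic_lt p nodal_monic)
  have hN : (nodal s v).eval x ≠ 0 := eval_nodal_not_at_node hx
  conv_lhs => rw [← modByMonic_add_div p (nodal s v), eval_add, eval_mul, hrem,
    eval_interpolate_not_at_node _ hx]
  field_simp
  ring

theorem integral_withDensity_inv_prod_sub {μ : Measure ℝ} {ι : Type*} [Fintype ι] {ε : ι → ℝ} (hε : ∀ᵐ t ∂μ, ∀ i, t < ε i) (f : ℝ → ℂ) :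
    ∫ t, f t ∂μ.withDensity (fun t => ENNReal.ofReal (∏ i, (ε i - t))⁻¹) =
      (-1) ^ Fintype.card ι *
        ∫ t, (((Lagrange.nodal Finset.univ ε).eval t : ℝ) : ℂ)⁻¹ * f t ∂μ := by
  rw [integral_withDensity_eq_integral_toReal_smul (by fun_prop)
    (ae_of_all _ fun _ => ENNReal.ofReal_lt_top), ← integral_const_mul]
  refine integral_congr_ae ?_
  filter_upwards [hε] with t ht
  have hsign : ∏ i, (ε i - t) = (-1) ^ Fintype.card ι * (Lagrange.nodal Finset.univ ε).eval t := by
    simpa [Lagrange.eval_nodal] using (Finset.prod_neg (s := Finset.univ) fun i => t - ε i)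
  have hpos : 0 < ∏ i, (ε i - t) := Finset.prod_pos fun i _ => sub_pos.2 (ht i)
  have hN : (Lagrange.nodal Finset.univ ε).eval t ≠ 0 := by
    rintro h0
    simp [hsign, h0] at hpos
  rw [ENNReal.toReal_ofReal (inv_nonneg.2 hpos.le), Complex.real_smul, hsign]
  push_cast
  field_simp
  rw [← pow_mul, pow_mul', neg_one_sq, one_pow, one_mul]

theorem integral_inv_eval_nodal_mul_eq_zero {μ : Measure ℝ} [IsFiniteMeasure μ] {K : Set ℝ}
    (hK : IsCompact K) (hμK : μ Kᶜ = 0) {ι : Type*} [Fintype ι] [DecidableEq ι] {ε : ι → ℝ}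
    (hε : Function.Injective ε) (hεK : ∀ i, ε i ∉ K) {f : ℝ → ℂ} (hf : ContinuousOn f K)
    (hpoles : ∀ i, ∫ t, ((t : ℂ) - ε i)⁻¹ * f t ∂μ = 0) {d : ℕ}
    (hpoly : ∀ p : ℝ[X], p.degree < d → ∫ t, ((p.eval t : ℝ) : ℂ) * f t ∂μ = 0) {p : ℝ[X]}
    (hp : p.natDegree < d + Fintype.card ι) :
    ∫ t, (((Lagrange.nodal Finset.univ ε).eval t : ℝ) : ℂ)⁻¹ * (((p.eval t : ℝ) : ℂ) * f t) ∂μ =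
      0 := by
  set N := Lagrange.nodal Finset.univ ε
  set c : ι → ℝ := fun i => Lagrange.nodalWeight Finset.univ ε i * (p %ₘ N).eval (ε i)
  have hne : ∀ t ∈ K, ∀ i, t ≠ ε i := fun t ht i hti => hεK i (hti ▸ ht)
  have hpole_int : ∀ i, Integrable (fun t : ℝ => ((t : ℂ) - ε i)⁻¹ * f t) μ := fun i =>
    ((continuousOn_inv_ofReal_sub (hεK i)).mul hf).integrable_of_measure_compl_eq_zero hK hμK
  have hsplit : ∀ᵐ t ∂μ, ((N.eval t : ℝ) : ℂ)⁻¹ * (((p.eval t : ℝ) : ℂ) * f t) =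
      (((p /ₘ N).eval t : ℝ) : ℂ) * f t + ∑ i, (c i : ℂ) * (((t : ℂ) - ε i)⁻¹ * f t) := by
    filter_upwards [ae_iff.2 hμK] with t ht
    rw [← mul_assoc, ← Complex.ofReal_inv, ← Complex.ofReal_mul, inv_mul_eq_div,
      Lagrange.eval_div_eval_nodal hε.injOn p fun i _ => hne t ht i]
    push_cast
    simp only [c, add_mul, Finset.sum_mul]
    congr 1
    refine Finset.sum_congr rfl fun i _ => ?_
    push_cast
    ring
  have hquot : (p /ₘ N).degree < d := degree_divByMonic_lt_of_natDegree_lt Lagrange.nodal_monic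
    (by rwa [Lagrange.natDegree_nodal, Finset.card_univ])
  rw [integral_congr_ae hsplit, integral_add, integral_finsetSum]
  · simp [integral_const_mul, hpoles, hpoly _ hquot]
  · exact fun i _ => (hpole_int i).const_mul _
  · exact ((Complex.continuous_ofReal.comp (p /ₘ N).continuous).continuousOn.mul hf
      ).integrable_of_measure_compl_eq_zero hK hμK
  · exact integrable_finsetSum _ fun i _ => (hpole_int i).const_mul _

theorem uvarov_determinant_poly_orthogonal_general (α : Measure ℝ) [IsFiniteMeasure α] (Q : ℝ)
    (hQ : α (Set.Icc (-Q) Q)ᶜ = 0)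
    (π : ℕ → Polynomial ℝ)
    (hmonic : ∀ j, (π j).Monic) (hdeg : ∀ j, (π j).natDegree = j)
    (horth : ∀ j k, j ≠ k → ∫ t, (π j).eval t * (π k).eval t ∂α = 0)
    -- Cauchy transforms h_k(ε) = (1/2πi) ∫ π_k(t)/(t-ε) dα(t)
    (h : ℕ → ℝ → ℂ)
    (hh : ∀ k e, h k e =
      (1 / (2 * (Real.pi : ℂ) * Complex.I)) *
        ∫ t, Complex.ofReal ((π k).eval t) / ((t : ℂ) - (e : ℂ)) ∂α)
    (m n : ℕ)
    (ε : Fin m → ℝ) (hε : Function.Injective ε) (hεQ : ∀ i, Q < ε i)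
    -- the modified measure dα^{[0,m]}(t) = ∏_j (ε_j - t)⁻¹ dα(t)
    (α' : Measure ℝ)
    (hα' : α' = α.withDensity (fun t => ENNReal.ofReal (∏ j, (ε j - t))⁻¹))
    -- the Uvarov determinant polynomial
    (q : ℝ → ℂ)
    (hq : q = fun t =>
      (Matrix.of fun i j : Fin (m + 1) =>
        if hi : (i : ℕ) < m then h (n - m + j) (ε ⟨i, hi⟩)
        else Complex.ofReal ((π (n - m + j)).eval t)).det) :
    (∀ j : Fin m, ∫ t, q t / ((t : ℂ) - (ε j : ℂ)) ∂α = 0) ∧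
    (∀ k < n, ∫ t, ((t : ℂ)) ^ k * q t ∂α' = 0) := by
  have hεK : ∀ i, ε i ∉ Set.Icc (-Q) Q := fun i hi => (hεQ i).not_ge hi.2
  have hint {E : Type} [NormedAddCommGroup E] {f : ℝ → E} (hf : ContinuousOn f (Set.Icc (-Q) Q)) :
      Integrable f α :=
    hf.integrable_of_measure_compl_eq_zero isCompact_Icc hQ
  let S : Sequence ℝ := ⟨π, fun j => by rw [degree_eq_natDegree (hmonic j).ne_zero, hdeg j]⟩
  let H : Fin m → Fin (m + 1) → ℂ := fun i j => h (n - m + j) (ε i)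
  let row : ℝ → Fin (m + 1) → ℂ := fun t j => ((π (n - m + j)).eval t : ℝ)
  have hq_snoc : q = fun t => (of (Fin.snoc H (row t))).det := by
    simp_rw [hq, of_snoc_eq_of_dite]
    rfl
  have hpoles (i : Fin m) : ∫ t, ((t : ℂ) - ε i)⁻¹ * q t ∂α = 0 := by
    rw [hq_snoc]
    refine integral_mul_det_of_snoc_eq_zero_of_eq_smul H i (2 * Real.pi * Complex.I)
      (fun j => hint ((continuousOn_inv_ofReal_sub (hεK i)).mul (by fun_prop))) fun j => ?_
    simp only [H, row, hh, div_eq_inv_mul]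
    field_simp
  have hpoly (p : ℝ[X]) (hp : p.degree < ↑(n - m)) : ∫ t, ((p.eval t : ℝ) : ℂ) * q t ∂α = 0 := by
    rw [hq_snoc]
    refine integral_mul_det_of_snoc_eq_zero H (fun j => hint (by fun_prop)) fun j => ?_
    simp only [row, ← Complex.ofReal_mul, integral_complex_ofReal, Complex.ofReal_eq_zero]
    exact S.integral_eval_mul_eq_zero_of_degree_lt (fun p => hint (by fun_prop)) horth
      (hp.trans_le (by exact_mod_cast Nat.le_add_right _ _))
  refine ⟨fun i => by simpa only [div_eq_inv_mul] using hpoles i, fun k hk => ?_⟩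
  have hq_cont : Continuous q := by rw [hq_snoc]; fun_prop
  have hlt : ∀ᵐ t ∂α, ∀ i, t < ε i := by
    filter_upwards [ae_iff.2 hQ] with t ht i using ht.2.trans_lt (hεQ i)
  rw [hα', integral_withDensity_inv_prod_sub hlt]
  simpa using integral_inv_eval_nodal_mul_eq_zero isCompact_Icc hQ hε hεK hq_cont.continuousOn
    hpoles hpoly (p := X ^ k) (by simp; omega)

/-- Orthogonality of the Uvarov determinant polynomial: `q(t)` is orthogonal to
`1/(t - ε_j)` w.r.t. `dα` and to `t^k`, `k < n`, w.r.t. `dα^{[0,m]}`. -/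
theorem uvarov_determinant_poly_orthogonal (α : Measure ℝ) [IsFiniteMeasure α] (Q : ℝ)
    (hQ : α (Set.Icc (-Q) Q)ᶜ = 0)
    (hposdef : ∀ p : Polynomial ℝ, p ≠ 0 → 0 < ∫ t, (p.eval t) ^ 2 ∂α)
    (π : ℕ → Polynomial ℝ)
    (hmonic : ∀ j, (π j).Monic) (hdeg : ∀ j, (π j).natDegree = j)
    (horth : ∀ j k, j ≠ k → ∫ t, (π j).eval t * (π k).eval t ∂α = 0)
    -- Cauchy transforms h_k(ε) = (1/2πi) ∫ π_k(t)/(t-ε) dα(t)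
    (h : ℕ → ℝ → ℂ)
    (hh : ∀ k e, h k e =
      (1 / (2 * (Real.pi : ℂ) * Complex.I)) *
        ∫ t, Complex.ofReal ((π k).eval t) / ((t : ℂ) - (e : ℂ)) ∂α)
    (m n : ℕ) (hmn : m ≤ n)
    (ε : Fin m → ℝ) (hε : Function.Injective ε) (hεQ : ∀ i, Q < ε i)
    -- the modified measure dα^{[0,m]}(t) = ∏_j (ε_j - t)⁻¹ dα(t)
    (α' : Measure ℝ)
    (hα' : α' = α.withDensity (fun t => ENNReal.ofReal (∏ j, (ε j - t))⁻¹))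
    -- the Uvarov determinant polynomial
    (q : ℝ → ℂ)
    (hq : q = fun t =>
      (Matrix.of fun i j : Fin (m + 1) =>
        if hi : (i : ℕ) < m then h (n - m + j) (ε ⟨i, hi⟩)
        else Complex.ofReal ((π (n - m + j)).eval t)).det) :
    (∀ j : Fin m, ∫ t, q t / ((t : ℂ) - (ε j : ℂ)) ∂α = 0) ∧
    (∀ k < n, ∫ t, ((t : ℂ)) ^ k * q t ∂α' = 0) :=
  uvarov_determinant_poly_orthogonal_general α Q hQ π hmonic hdeg horth h hh m n ε hε hεQ α' hα' q
    hq
end
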